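/- arXiv:2404.12564 — 5 statements merged into one kernel-verified Lean document; each statement's English description precedes it below -/
import Mathlib

section
/- Let X be a finite T0 topological space (equivalently a finite poset) and let x be a down beat point of X, i.e. the set of elements strictly below x has a maximum. If y ≠ x is also a down beat point of X, then y is a down beat point of the subspace X \ {x}. -/
/-- If `x` is a down beat point of a finite poset `X` (i.e. `{z | z < x}` has a maximum) and
`y ≠ x` is also a down beat point of `X`, then `y` is a down beat point of `X \ {x}`. -/
theorem downBeatPoint_of_downBeatPoint_erase {X : Type*} [PartialOrder X] [Fintype X]
    (x y : X) (hx : ∃ m, IsGreatest {z | z < x} m) (hyx : y ≠ x)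
    (hy : ∃ m, IsGreatest {z | z < y} m) :
    ∃ m : {z : X // z ≠ x}, IsGreatest {w : {z : X // z ≠ x} | w < ⟨y, hyx⟩} m := by
  obtain ⟨m, hmlt, hmub⟩ := hy
  by_cases hmx : m = x
  · subst hmx
    obtain ⟨m', hm'lt, hm'ub⟩ := hx
    refine ⟨⟨m', ne_of_lt hm'lt⟩, ?_, ?_⟩
    · show m' < y
      exact hm'lt.trans hmlt
    · rintro ⟨w, hwx⟩ hw
      have hwy : w < y := hw
      have h1 : w ≤ m := hmub hwy
      show w ≤ m'
      exact hm'ub (lt_of_le_of_ne h1 hwx)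
  · refine ⟨⟨m, hmx⟩, ?_, ?_⟩
    · show m < y; exact hmlt
    · rintro ⟨w, hwx⟩ hw
      show w ≤ m
      exact hmub hw
end

section
/- Let X be a finite poset and A ⊆ X a subset such that every point of X \ A is a down beat point of X. Then A is a strong deformation retract of X (with the subspace Alexandroff topology). -/
open Topology

set_option linter.unusedSectionVars false

section Aux

variable {X : Type*} [PartialOrder X] [Fintype X] (A : Set X)

open Classical in
/-- One step of the retraction: send a point outside `A` to the maximum of its
strict lower set, and fix points of `A`. -/
noncomputable def dbpStep (h : ∀ x : X, x ∉ A → ∃ m, IsGreatest {z | z < x} m) (x : X) : X :=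
  if hx : x ∈ A then x else (h x hx).choose

variable (h : ∀ x : X, x ∉ A → ∃ m, IsGreatest {z | z < x} m)

lemma dbpStep_mem (x : X) (hx : x ∈ A) : dbpStep A h x = x := by
  simp [dbpStep, hx]

lemma dbpStep_lt (x : X) (hx : x ∉ A) : dbpStep A h x < x := by
  simpa [dbpStep, hx] using (h x hx).choose_spec.1

lemma dbpStep_greatest (x : X) (hx : x ∉ A) {z : X} (hz : z < x) : z ≤ dbpStep A h x := by
  simpa [dbpStep, hx] using (h x hx).choose_spec.2 hz

lemma dbpStep_le (x : X) : dbpStep A h x ≤ x := by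
  by_cases hx : x ∈ A
  · exact le_of_eq (dbpStep_mem A h x hx)
  · exact (dbpStep_lt A h x hx).le

lemma dbpStep_mono : Monotone (dbpStep A h) := by
  intro x y hxy
  rcases eq_or_lt_of_le hxy with rfl | hlt
  · exact le_rfl
  · by_cases hy : y ∈ A
    · rw [dbpStep_mem A h y hy]
      exact (dbpStep_le A h x).trans hxy
    · exact (dbpStep_le A h x).trans (dbpStep_greatest A h y hy hlt)

/-- The retraction: iterate the step `card X` times. -/
noncomputable def dbpRetr (x : X) : X := (dbpStep A h)^[Fintype.card X] x

lemma dbpRetr_mono : Monotone (dbpRetr A h) := (dbpStep_mono A h).iterate _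

lemma dbpIter_mem {x : X} (hx : x ∈ A) (n : ℕ) : (dbpStep A h)^[n] x = x := by
  induction n with
  | zero => rfl
  | succ n ih => rw [Function.iterate_succ_apply', ih, dbpStep_mem A h x hx]

lemma dbpIter_le (x : X) (n : ℕ) : (dbpStep A h)^[n] x ≤ x := by
  induction n with
  | zero => exact le_rfl
  | succ n ih =>
      rw [Function.iterate_succ_apply']
      exact (dbpStep_le A h _).trans ih

lemma dbpRetr_mem_of_mem {x : X} (hx : x ∈ A) : dbpRetr A h x = x := dbpIter_mem A h hx _

lemma dbpRetr_le (x : X) : dbpRetr A h x ≤ x := dbpIter_le A h x _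

lemma dbpRetr_mem (x : X) : dbpRetr A h x ∈ A := by
  set N := Fintype.card X with hN
  -- first find some n ≤ N with the n-th iterate in A
  have key : ∃ n ≤ N, (dbpStep A h)^[n] x ∈ A := by
    by_contra hcon
    push_neg at hcon
    have hstep : ∀ j ≤ N, ∀ i < j, (dbpStep A h)^[j] x < (dbpStep A h)^[i] x := by
      intro j hj
      induction j with
      | zero => intro i hi; omega
      | succ j ih =>
          intro i hi
          have hj' : j ≤ N := Nat.le_of_succ_le hj
          have hlt : (dbpStep A h)^[j+1] x < (dbpStep A h)^[j] x := by
            rw [Function.iterate_succ_apply']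
            exact dbpStep_lt A h _ (hcon j hj')
          rcases Nat.lt_succ_iff_lt_or_eq.mp hi with hij | rfl
          · exact hlt.trans (ih hj' i hij)
          · exact hlt
    have hinj : Function.Injective (fun i : Fin (N + 1) => (dbpStep A h)^[i] x) := by
      intro i j hij
      change (dbpStep A h)^[(i:ℕ)] x = (dbpStep A h)^[(j:ℕ)] x at hij
      by_contra hne
      rcases Ne.lt_or_gt (fun e => hne (Fin.ext e) : (i : ℕ) ≠ (j : ℕ)) with hlt | hlt
      · exact absurd hij (ne_of_gt (hstep j (Nat.lt_succ_iff.mp j.isLt) i hlt))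
      · exact absurd hij (ne_of_lt (hstep i (Nat.lt_succ_iff.mp i.isLt) j hlt))
    have := Fintype.card_le_of_injective _ hinj
    simp [hN] at this
  obtain ⟨n, hn, hmem⟩ := key
  have heq : dbpRetr A h x = (dbpStep A h)^[n] x := by
    have hNn : Fintype.card X = (Fintype.card X - n) + n := by omega
    rw [dbpRetr, hNn, Function.iterate_add_apply, dbpIter_mem A h hmem]
  rw [heq]; exact hmem

end Aux

/-- If every point of `X \ A` is a down beat point of the finite poset `X`, then `A` is a
strong deformation retract of `X` with the (lower-set) Alexandroff topology: there is a
continuous retraction of `X` onto `A` which is homotopic to the identity relative to `A`. -/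
theorem strong_deformation_retract_of_downBeatPoints {X : Type*} [PartialOrder X] [Fintype X]
    (A : Set X)
    (h : ∀ x : X, x ∉ A → ∃ m, IsGreatest {z | z < x} m) :
    ∃ r : C(Topology.WithLowerSet X, Topology.WithLowerSet X),
      (∀ x, Topology.WithLowerSet.ofLowerSet (r x) ∈ A) ∧
      (∀ x, Topology.WithLowerSet.ofLowerSet x ∈ A → r x = x) ∧
      Nonempty ((ContinuousMap.id (Topology.WithLowerSet X)).HomotopyRel r
        {x : Topology.WithLowerSet X | Topology.WithLowerSet.ofLowerSet x ∈ A}) := by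
  set r : C(Topology.WithLowerSet X, Topology.WithLowerSet X) :=
    Topology.WithLowerSet.map ⟨dbpRetr A h, dbpRetr_mono A h⟩ with hr
  refine ⟨r, fun x => dbpRetr_mem A h _, fun x hx => ?_, ?_⟩
  · exact congrArg Topology.WithLowerSet.toLowerSet (dbpRetr_mem_of_mem A h hx)
  · -- the homotopy: identity at time 0, the retraction for positive times
    have hcont : Continuous fun p : unitInterval × Topology.WithLowerSet X =>
        if p.1 = 0 then p.2 else r p.2 := by
      rw [continuous_def]
      intro U hU
      have hUl : IsLowerSet (Topology.WithLowerSet.toLowerSet ⁻¹' U) := hU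
      have hpre : (fun p : unitInterval × Topology.WithLowerSet X =>
            if p.1 = 0 then p.2 else r p.2) ⁻¹' U
          = ((Set.univ : Set unitInterval) ×ˢ U) ∪ ({(0 : unitInterval)}ᶜ ×ˢ (r ⁻¹' U)) := by
        ext ⟨t, x⟩
        by_cases ht : t = 0
        · simp [ht]
        · simp only [Set.mem_preimage, Set.mem_union, Set.mem_prod, Set.mem_univ, true_and,
            Set.mem_compl_iff, Set.mem_singleton_iff, ht, if_neg ht, not_false_iff, and_true]
          constructor
          · exact Or.inr
          · rintro (hx | hx)
            · exact hUl (dbpRetr_le A h (Topology.WithLowerSet.ofLowerSet x)) hx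
            · exact hx
      rw [hpre]
      exact (isOpen_univ.prod hU).union
        ((isOpen_compl_singleton).prod (r.continuous.isOpen_preimage U hU))
    refine ⟨⟨⟨⟨fun p => if p.1 = 0 then p.2 else r p.2, hcont⟩, by simp, ?_⟩, ?_⟩⟩
    · intro x
      simp [show (1 : unitInterval) ≠ 0 by norm_num]
    · intro t x hx
      have hfix : r x = x :=
        congrArg Topology.WithLowerSet.toLowerSet (dbpRetr_mem_of_mem A h hx)
      by_cases ht : t = 0 <;> simp [ht, hfix]
end

section
/- Let X be a finite poset and A ⊆ X. The inclusion i : Sd A → X'(A) and the map r : X'(A) → Sd A given by r(σ) = σ ∩ A are mutually inverse homotopy equivalences of finite spaces; in particular r is monotone, r∘i = id, and i∘r(σ) ≤ σ for all σ. -/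
open Topology

/-- The barycentric subdivision of a poset `X`: the poset of nonempty finite chains of `X`,
ordered by inclusion. -/
abbrev Sd (X : Type*) [PartialOrder X] : Type _ :=
  {σ : Finset X // σ.Nonempty ∧ IsChain (· ≤ ·) (σ : Set X)}

/-- `Sd A`, realized as the subposet of `Sd X` of chains contained in `A`. -/
abbrev SdIn {X : Type*} [PartialOrder X] (A : Finset X) : Type _ :=
  {σ : Sd X // σ.1 ⊆ A}

/-- `X'(A)`, the subposet of `Sd X` of chains meeting `A`. -/
abbrev Exch {X : Type*} [PartialOrder X] [DecidableEq X] (A : Finset X) : Type _ :=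
  {σ : Sd X // (σ.1 ∩ A).Nonempty}

open scoped Classical in
/-- Two comparable monotone maps induce homotopic maps on lower-set spaces. -/
noncomputable def homotopyOfLE {α β : Type*} [Preorder α] [Preorder β] (f g : α →o β)
    (h : ∀ x, f x ≤ g x) :
    (Topology.WithLowerSet.map f).Homotopy (Topology.WithLowerSet.map g) where
  toFun := fun p => if p.1 = 1 then Topology.WithLowerSet.map g p.2
    else Topology.WithLowerSet.map f p.2
  continuous_toFun := by
    rw [continuous_def]
    intro U hU
    have hls : IsLowerSet (Topology.WithLowerSet.toLowerSet ⁻¹' U) :=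
      Topology.WithLowerSet.isLowerSet_toLowerSet_preimage.mpr hU
    have key : (fun p : unitInterval × Topology.WithLowerSet α =>
        if p.1 = 1 then Topology.WithLowerSet.map g p.2
          else Topology.WithLowerSet.map f p.2) ⁻¹' U =
        (({1}ᶜ : Set unitInterval) ×ˢ (Topology.WithLowerSet.map f ⁻¹' U)) ∪
        ((Set.univ : Set unitInterval) ×ˢ (Topology.WithLowerSet.map g ⁻¹' U)) := by
      ext ⟨t, x⟩
      by_cases ht : t = 1
      · subst ht
        simp
      · simp only [Set.mem_preimage, if_neg ht, Set.mem_union, Set.mem_prod,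
          Set.mem_compl_iff, Set.mem_singleton_iff, ht, not_false_iff, true_and,
          Set.mem_univ]
        constructor
        · intro hf; exact Or.inl hf
        · rintro (hf | hg)
          · exact hf
          · exact hls (h _) hg
    rw [key]
    exact ((isOpen_compl_singleton.prod
        ((Topology.WithLowerSet.map f).continuous.isOpen_preimage U hU))).union
      (isOpen_univ.prod ((Topology.WithLowerSet.map g).continuous.isOpen_preimage U hU))
  map_zero_left x := by norm_num
  map_one_left x := by simp

/-- The inclusion `i : Sd A → X'(A)` and the map `r : X'(A) → Sd A`, `r σ = σ ∩ A`, are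
monotone, satisfy `r ∘ i = id` and `i ∘ r ≤ id` pointwise, and are mutually inverse homotopy
equivalences of the associated finite (Alexandroff) spaces. -/
theorem sd_exch_homotopy_equiv {X : Type*} [PartialOrder X] [Fintype X] [DecidableEq X]
    (A : Finset X) :
    ∃ (i : SdIn A →o Exch A) (r : Exch A →o SdIn A),
      (∀ τ : SdIn A, ((i τ).1 : Finset X) = τ.1.1) ∧
      (∀ σ : Exch A, ((r σ).1 : Finset X) = σ.1.1 ∩ A) ∧
      (∀ τ : SdIn A, r (i τ) = τ) ∧
      (∀ σ : Exch A, i (r σ) ≤ σ) ∧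
      Nonempty (((Topology.WithLowerSet.map i).comp (Topology.WithLowerSet.map r)).Homotopy
        (ContinuousMap.id (Topology.WithLowerSet (Exch A)))) ∧
      Nonempty (((Topology.WithLowerSet.map r).comp (Topology.WithLowerSet.map i)).Homotopy
        (ContinuousMap.id (Topology.WithLowerSet (SdIn A)))) := by
  classical
  set i : SdIn A →o Exch A :=
    { toFun := fun τ => ⟨τ.1, by
        obtain ⟨hne, _⟩ := τ.1.2
        rw [Finset.inter_eq_left.mpr τ.2]
        exact hne⟩
      monotone' := fun a b hab => hab } with hi
  set r : Exch A →o SdIn A :=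
    { toFun := fun σ => ⟨⟨σ.1.1 ∩ A, σ.2, σ.1.2.2.mono (by
        intro x hx
        simp only [Finset.coe_inter, Set.mem_inter_iff] at hx
        exact hx.1)⟩, Finset.inter_subset_right⟩
      monotone' := fun a b hab => by
        show a.1.1 ∩ A ⊆ b.1.1 ∩ A
        exact Finset.inter_subset_inter hab (le_refl A) } with hr
  have hri : ∀ τ : SdIn A, r (i τ) = τ := by
    intro τ
    apply Subtype.ext; apply Subtype.ext
    show τ.1.1 ∩ A = τ.1.1
    exact Finset.inter_eq_left.mpr τ.2
  have hir : ∀ σ : Exch A, i (r σ) ≤ σ := by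
    intro σ
    show σ.1.1 ∩ A ⊆ σ.1.1
    exact Finset.inter_subset_left
  refine ⟨i, r, fun τ => rfl, fun σ => rfl, hri, hir, ?_, ?_⟩
  · refine ⟨?_⟩
    have := homotopyOfLE (i.comp r) (OrderHom.id) hir
    rwa [Topology.WithLowerSet.map_comp, Topology.WithLowerSet.map_id] at this
  · refine ⟨?_⟩
    have hcomp : r.comp i = OrderHom.id := by
      exact OrderHom.ext _ _ (funext hri)
    have : (Topology.WithLowerSet.map r).comp (Topology.WithLowerSet.map i) =
        ContinuousMap.id (Topology.WithLowerSet (SdIn A)) := by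
      rw [← Topology.WithLowerSet.map_comp, hcomp, Topology.WithLowerSet.map_id]
    rw [this]
    exact (ContinuousMap.Homotopy.refl (ContinuousMap.id (Topology.WithLowerSet (SdIn A))))
end

section
/- Let X be a finite poset and A, B ⊆ X. Any chain in the poset I(A,B) = {(a,b) ∈ A × B | a ≤ b} ⊆ X^op × X has length at most the height of A ∪ B; moreover if A ∩ B = ∅ then the height of I(A,B) is strictly less than the height of A ∪ B. -/
open scoped Classical


/-- The order relation of `I(A,B) ⊆ X^op × X`: `(a,b) ≤ (a',b')` iff `a' ≤ a` and `b ≤ b'`. -/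
def IntLE {X : Type*} [PartialOrder X] (p q : X × X) : Prop :=
  q.1 ≤ p.1 ∧ p.2 ≤ q.2

section Aux

variable {X : Type*} [PartialOrder X]

private def eDual (p : X × X) : Xᵒᵈ × X := (OrderDual.toDual p.1, p.2)

private lemma intLE_iff (p q : X × X) : IntLE p q ↔ eDual p ≤ eDual q := by
  simp [IntLE, eDual, Prod.le_def, and_comm]

private lemma eDual_inj : Function.Injective (eDual (X := X)) := by
  intro p q h
  simpa [eDual, Prod.ext_iff] using h

/-- A finite nonempty `IntLE`-chain has a top element. -/
private lemma exists_top {c : Finset (X × X)} (hne : c.Nonempty)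
    (hchain : IsChain IntLE (c : Set (X × X))) :
    ∃ m ∈ c, ∀ p ∈ c, IntLE p m := by
  obtain ⟨m, hm, hmax⟩ := Set.Finite.exists_maximalFor eDual (c : Set (X × X))
    c.finite_toSet (by exact_mod_cast hne)
  refine ⟨m, hm, fun p hp => ?_⟩
  rcases eq_or_ne p m with rfl | hne'
  · exact ⟨le_rfl, le_rfl⟩
  · rcases hchain (by exact_mod_cast hp) (by exact_mod_cast hm) hne' with h | h
    · exact h
    · rw [intLE_iff] at h
      exact absurd (eDual_inj (le_antisymm h (hmax (j := p) (by exact_mod_cast hp) h))).symm hne'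

/-- Key counting lemma: firsts + seconds of a chain number at least `|c| + 1`. -/
private lemma card_fst_snd : ∀ c : Finset (X × X), c.Nonempty →
    IsChain IntLE (c : Set (X × X)) →
    c.card + 1 ≤ (c.image Prod.fst).card + (c.image Prod.snd).card := by
  intro c
  induction c using Finset.strongInduction with
  | _ c ih =>
    intro hne hchain
    obtain ⟨m, hm, hmax⟩ := exists_top hne hchain
    set c' := c.erase m with hc'
    have hins : c = insert m c' := (Finset.insert_erase hm).symm
    have hmnot : m ∉ c' := Finset.notMem_erase m c
    have hFS : c.image Prod.fst = insert m.1 (c'.image Prod.fst) := by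
      rw [hins, Finset.image_insert]
    have hSS : c.image Prod.snd = insert m.2 (c'.image Prod.snd) := by
      rw [hins, Finset.image_insert]
    have hcard : c.card = c'.card + 1 := by
      rw [hins, Finset.card_insert_of_notMem hmnot]
    rcases c'.eq_empty_or_nonempty with h0 | hne'
    · rw [hFS, hSS, h0]
      simp [hcard, h0]
    · have hsub : c' ⊂ c := Finset.erase_ssubset hm
      have hchain' : IsChain IntLE (c' : Set (X × X)) :=
        hchain.mono (by exact_mod_cast hsub.subset)
      have IH := ih c' hsub hne' hchain'
      -- at least one of m.1, m.2 is fresh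
      have fresh : m.1 ∉ c'.image Prod.fst ∨ m.2 ∉ c'.image Prod.snd := by
        by_contra hcon
        push_neg at hcon
        obtain ⟨hf, hs⟩ := hcon
        obtain ⟨p, hp, hp1⟩ := Finset.mem_image.1 hf
        obtain ⟨q, hq, hq2⟩ := Finset.mem_image.1 hs
        have hpc : p ∈ c := Finset.mem_of_mem_erase hp
        have hqc : q ∈ c := Finset.mem_of_mem_erase hq
        have hpm : IntLE p m := hmax p hpc
        have hqm : IntLE q m := hmax q hqc
        have hpne : p ≠ m := Finset.ne_of_mem_erase hp
        have hqne : q ≠ m := Finset.ne_of_mem_erase hq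
        have hp2 : p.2 < m.2 := lt_of_le_of_ne hpm.2 (by
          intro h; exact hpne (Prod.ext hp1 h))
        have hq1 : m.1 < q.1 := lt_of_le_of_ne hqm.1 (by
          intro h; exact hqne (Prod.ext h.symm hq2))
        rcases eq_or_ne p q with rfl | hpq
        · rw [hp1] at hq1; exact lt_irrefl _ hq1
        · rcases hchain hpc hqc hpq with h | h
          · -- IntLE p q : q.1 ≤ p.1 = m.1 < q.1
            exact absurd (h.1.trans_lt (hp1 ▸ hq1)) (lt_irrefl _)
          · -- IntLE q p : m.2 = q.2 ≤ p.2 < m.2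
            exact absurd ((hq2 ▸ h.2).trans_lt hp2) (lt_irrefl _)
      rcases fresh with hfresh | hfresh
      · have : (c.image Prod.fst).card = (c'.image Prod.fst).card + 1 := by
          rw [hFS, Finset.card_insert_of_notMem hfresh]
        have hS : (c'.image Prod.snd).card ≤ (c.image Prod.snd).card :=
          Finset.card_le_card (Finset.image_subset_image hsub.subset)
        omega
      · have : (c.image Prod.snd).card = (c'.image Prod.snd).card + 1 := by
          rw [hSS, Finset.card_insert_of_notMem hfresh]
        have hF : (c'.image Prod.fst).card ≤ (c.image Prod.fst).card :=
          Finset.card_le_card (Finset.image_subset_image hsub.subset)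
        omega

end Aux

/-- Any (finite, nonempty) chain in `I(A,B) = {(a,b) ∈ A × B | a ≤ b}` has length at most the
height of `A ∪ B` (there is a chain in `A ∪ B` with at least as many elements); moreover,
if `A ∩ B = ∅`, the height of `I(A,B)` is strictly less than the height of `A ∪ B`. -/
theorem chain_interval_height {X : Type*} [PartialOrder X] [Fintype X] (A B : Set X) :
    (∀ c : Finset (X × X), c.Nonempty →
      (∀ p ∈ c, p.1 ∈ A ∧ p.2 ∈ B ∧ p.1 ≤ p.2) → IsChain IntLE (c : Set (X × X)) →
      ∃ c' : Finset X, (c' : Set X) ⊆ A ∪ B ∧ IsChain (· ≤ ·) (c' : Set X) ∧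
        c.card ≤ c'.card) ∧
    (A ∩ B = ∅ → ∀ c : Finset (X × X), c.Nonempty →
      (∀ p ∈ c, p.1 ∈ A ∧ p.2 ∈ B ∧ p.1 ≤ p.2) → IsChain IntLE (c : Set (X × X)) →
      ∃ c' : Finset X, (c' : Set X) ⊆ A ∪ B ∧ IsChain (· ≤ ·) (c' : Set X) ∧
        c.card + 1 ≤ c'.card) := by
  -- shared construction
  have key : ∀ c : Finset (X × X), c.Nonempty →
      (∀ p ∈ c, p.1 ∈ A ∧ p.2 ∈ B ∧ p.1 ≤ p.2) → IsChain IntLE (c : Set (X × X)) →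
      ∃ F S : Finset X, ((F ∪ S : Finset X) : Set X) ⊆ A ∪ B ∧
        IsChain (· ≤ ·) ((F ∪ S : Finset X) : Set X) ∧
        c.card + 1 ≤ F.card + S.card ∧ (∀ x ∈ F, x ∈ A) ∧ (∀ x ∈ S, x ∈ B) ∧
        (F ∩ S).card ≤ 1 := by
    intro c hne hmem hchain
    refine ⟨c.image Prod.fst, c.image Prod.snd, ?_, ?_, card_fst_snd c hne hchain, ?_, ?_, ?_⟩
    all_goals
      try skip
    · intro x hx
      simp only [Finset.coe_union, Set.mem_union, Finset.mem_coe, Finset.mem_image] at hx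
      rcases hx with ⟨p, hp, rfl⟩ | ⟨p, hp, rfl⟩
      · exact Or.inl (hmem p hp).1
      · exact Or.inr (hmem p hp).2.1
    · -- chain
      have fst_le_snd : ∀ p ∈ c, ∀ q ∈ c, p.1 ≤ q.2 := by
        intro p hp q hq
        rcases eq_or_ne p q with rfl | hpq
        · exact (hmem p hp).2.2
        · rcases hchain hp hq hpq with h | h
          · exact (hmem p hp).2.2.trans h.2
          · exact h.1.trans (hmem q hq).2.2
      intro x hx y hy hxy
      simp only [Finset.coe_union, Set.mem_union, Finset.mem_coe, Finset.mem_image] at hx hy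
      rcases hx with ⟨p, hp, rfl⟩ | ⟨p, hp, rfl⟩ <;>
        rcases hy with ⟨q, hq, rfl⟩ | ⟨q, hq, rfl⟩
      · rcases eq_or_ne p q with rfl | hpq
        · exact absurd rfl hxy
        · rcases hchain hp hq hpq with h | h
          · exact Or.inr h.1
          · exact Or.inl h.1
      · exact Or.inl (fst_le_snd p hp q hq)
      · exact Or.inr (fst_le_snd q hq p hp)
      · rcases eq_or_ne p q with rfl | hpq
        · exact absurd rfl hxy
        · rcases hchain hp hq hpq with h | h
          · exact Or.inl h.2
          · exact Or.inr h.2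
    · intro x hx
      obtain ⟨p, hp, rfl⟩ := Finset.mem_image.1 hx
      exact (hmem p hp).1
    · intro x hx
      obtain ⟨p, hp, rfl⟩ := Finset.mem_image.1 hx
      exact (hmem p hp).2.1
    · -- intersection has at most one element
      rw [Finset.card_le_one]
      intro x hx y hy
      simp only [Finset.mem_inter, Finset.mem_image] at hx hy
      obtain ⟨⟨p, hp, hp1⟩, ⟨q, hq, hq2⟩⟩ := hx
      obtain ⟨⟨r, hr, hr1⟩, ⟨s, hs, hs2⟩⟩ := hy
      have fst_le_snd : ∀ p ∈ c, ∀ q ∈ c, p.1 ≤ q.2 := by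
        intro p hp q hq
        rcases eq_or_ne p q with rfl | hpq
        · exact (hmem p hp).2.2
        · rcases hchain hp hq hpq with h | h
          · exact (hmem p hp).2.2.trans h.2
          · exact h.1.trans (hmem q hq).2.2
      have h1 : x ≤ y := hp1 ▸ hs2 ▸ fst_le_snd p hp s hs
      have h2 : y ≤ x := hr1 ▸ hq2 ▸ fst_le_snd r hr q hq
      exact le_antisymm h1 h2
  constructor
  · intro c hne hmem hchain
    obtain ⟨F, S, hsub, hchain', hcard, _, _, hinter⟩ := key c hne hmem hchain
    refine ⟨F ∪ S, hsub, hchain', ?_⟩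
    have := Finset.card_union_add_card_inter F S
    omega
  · intro hAB c hne hmem hchain
    obtain ⟨F, S, hsub, hchain', hcard, hFA, hSB, _⟩ := key c hne hmem hchain
    refine ⟨F ∪ S, hsub, hchain', ?_⟩
    have hdis : Disjoint F S := by
      rw [Finset.disjoint_left]
      intro x hxF hxS
      have : x ∈ A ∩ B := ⟨hFA x hxF, hSB x hxS⟩
      rw [hAB] at this
      exact this
    rw [Finset.card_union_of_disjoint hdis]
    exact hcard
end

section
/- Let X be a poset, A, B ⊆ X, a₀ ∈ A an up beat point of A (i.e. {x ∈ A | x > a₀} has a minimum), and b₀ a minimal element of B ∩ F_{a₀}. Then (a₀, b₀) is either a minimal element of I(A,B) or a down beat point of I(A,B). -/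
/-- The poset of intervals `I(A,B) = {(a,b) ∈ A × B | a ≤ b}`, as a subposet of `Xᵒᵈ × X`. -/
abbrev IntervalPoset {X : Type*} [PartialOrder X] (A B : Set X) : Type _ :=
  {p : Xᵒᵈ × X // OrderDual.ofDual p.1 ∈ A ∧ p.2 ∈ B ∧ OrderDual.ofDual p.1 ≤ p.2}

/-- If `a₀ ∈ A` is an up beat point of `A` (i.e. `{x ∈ A | x > a₀}` has a minimum) and `b₀`
is minimal in `B ∩ F_{a₀}`, then `(a₀, b₀)` is either a minimal element of `I(A,B)` or a
down beat point of `I(A,B)`. -/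
theorem interval_isMin_or_downBeat {X : Type*} [PartialOrder X] (A B : Set X) (a₀ b₀ : X)
    (ha₀ : a₀ ∈ A) (hbeat : ∃ m, IsLeast {x ∈ A | a₀ < x} m)
    (hb₀ : b₀ ∈ B ∩ {x | a₀ ≤ x})
    (hmin : ∀ b ∈ B ∩ {x | a₀ ≤ x}, b ≤ b₀ → b = b₀) :
    IsMin (⟨(OrderDual.toDual a₀, b₀), ha₀, hb₀.1, hb₀.2⟩ : IntervalPoset A B) ∨
      ∃ m, IsGreatest
        {q : IntervalPoset A B |
          q < ⟨(OrderDual.toDual a₀, b₀), ha₀, hb₀.1, hb₀.2⟩} m := by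
  obtain ⟨m, ⟨hmA, ha₀m⟩, hleast⟩ := hbeat
  by_cases hmb : m ≤ b₀
  · right
    refine ⟨⟨(OrderDual.toDual m, b₀), hmA, hb₀.1, hmb⟩, ?_, ?_⟩
    · have hle : (⟨(OrderDual.toDual m, b₀), hmA, hb₀.1, hmb⟩ : IntervalPoset A B) ≤
          ⟨(OrderDual.toDual a₀, b₀), ha₀, hb₀.1, hb₀.2⟩ :=
        Subtype.mk_le_mk.mpr (Prod.mk_le_mk.mpr ⟨ha₀m.le, le_rfl⟩)
      refine lt_of_le_of_ne hle ?_
      intro h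
      have : m = a₀ := congrArg (fun q : IntervalPoset A B => OrderDual.ofDual q.val.1) h
      exact absurd this (ne_of_gt ha₀m)
    · rintro ⟨⟨a, b⟩, haA, hbB, hab⟩ hq
      simp only [Set.mem_setOf_eq] at hq
      obtain ⟨⟨h1, h2⟩, hne⟩ := lt_iff_le_and_ne.mp hq
      have ha₀a : a₀ ≤ OrderDual.ofDual a := h1
      have hbb₀ : b = b₀ := hmin b ⟨hbB, le_trans ha₀a hab⟩ h2
      have hane : OrderDual.ofDual a ≠ a₀ := by
        intro h
        apply hne
        ext
        · exact congrArg OrderDual.toDual h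
        · exact hbb₀
      have : a₀ < OrderDual.ofDual a := lt_of_le_of_ne ha₀a (Ne.symm hane)
      exact Subtype.mk_le_mk.mpr (Prod.mk_le_mk.mpr ⟨hleast ⟨haA, this⟩, h2⟩)
  · left
    rintro ⟨⟨a, b⟩, haA, hbB, hab⟩ hq
    obtain ⟨h1, h2⟩ := Subtype.mk_le_mk.mp hq
    have ha₀a : a₀ ≤ OrderDual.ofDual a := h1
    have hbb₀ : b = b₀ := hmin b ⟨hbB, le_trans ha₀a hab⟩ h2
    have haa₀ : OrderDual.ofDual a = a₀ := by
      by_contra h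
      have : a₀ < OrderDual.ofDual a := lt_of_le_of_ne ha₀a (Ne.symm h)
      exact hmb (le_trans (hleast ⟨haA, this⟩) (hbb₀ ▸ hab))
    exact Subtype.mk_le_mk.mpr (Prod.mk_le_mk.mpr ⟨le_of_eq (congrArg OrderDual.toDual haa₀.symm), hbb₀.ge⟩)
end
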